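/- arXiv:2509.22549 — 5 statements merged into one kernel-verified Lean document; each statement's English description precedes it below -/
import Mathlib

section
/- Let (X,μ_X) and (Y,μ_Y) be Polish probability spaces, X' and Y' Polish spaces, and f:X→X', g:Y→Y' Borel measurable maps. Then the set of couplings of the pushforward measures f_#μ_X and g_#μ_Y equals the set of pushforwards (f×g)_#π where π ranges over couplings of μ_X and μ_Y. -/
/-!
Disintegrate `μX` along `f`: the conditional distribution `κX = condDistrib id f μX` is a kernel
from `X'` to `X` with `κX ∘ₘ f_#μX = μX` whose pushforward under `f` is a.e. the identity kernel.
Given a coupling `π'` of `f_#μX` and `g_#μY`, the measure `(κX ∥ₖ κY) ∘ₘ π'` is then a coupling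
of `μX` and `μY`, and its pushforward under `f × g` is `(id ∥ₖ id) ∘ₘ π' = π'`.
-/

open MeasureTheory ProbabilityTheory

namespace ProbabilityTheory.Kernel

variable {α β γ δ β' δ' : Type*} [MeasurableSpace α] [MeasurableSpace β] [MeasurableSpace γ]
  [MeasurableSpace δ] [MeasurableSpace β'] [MeasurableSpace δ']

lemma map_fst_parallelComp_comp (π : Measure (α × γ)) (κ : Kernel α β) [IsSFiniteKernel κ]
    (η : Kernel γ δ) [IsMarkovKernel η] :
    ((κ ∥ₖ η) ∘ₘ π).map Prod.fst = κ ∘ₘ π.map Prod.fst := by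
  have h : (κ ∥ₖ η).map Prod.fst = κ ∘ₖ deterministic Prod.fst measurable_fst := by
    ext p : 1
    simp [map_apply _ measurable_fst, parallelComp_apply, comp_deterministic_eq_comap]
  rw [Measure.map_comp _ _ measurable_fst, h, ← Measure.comp_assoc,
    Measure.deterministic_comp_eq_map]

lemma map_snd_parallelComp_comp (π : Measure (α × γ)) (κ : Kernel α β) [IsMarkovKernel κ]
    (η : Kernel γ δ) [IsSFiniteKernel η] :
    ((κ ∥ₖ η) ∘ₘ π).map Prod.snd = η ∘ₘ π.map Prod.snd := by
  have h : (κ ∥ₖ η).map Prod.snd = η ∘ₖ deterministic Prod.snd measurable_snd := by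
    ext p : 1
    simp [map_apply _ measurable_snd, parallelComp_apply, comp_deterministic_eq_comap]
  rw [Measure.map_comp _ _ measurable_snd, h, ← Measure.comp_assoc,
    Measure.deterministic_comp_eq_map]

lemma map_prodMap_parallelComp (κ : Kernel α β) [IsSFiniteKernel κ] (η : Kernel γ δ)
    [IsSFiniteKernel η] {f : β → β'} {g : δ → δ'} (hf : Measurable f) (hg : Measurable g) :
    (κ ∥ₖ η).map (Prod.map f g) = κ.map f ∥ₖ η.map g := by
  rw [← deterministic_comp_eq_map hf, ← deterministic_comp_eq_map hg,
    ← deterministic_comp_eq_map (hf.prodMap hg), ← deterministic_parallelComp_deterministic,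
    parallelComp_comp_parallelComp]

lemma parallelComp_comp_congr (π : Measure (α × γ)) {κ κ' : Kernel α β} [IsSFiniteKernel κ]
    [IsSFiniteKernel κ'] {η η' : Kernel γ δ} [IsSFiniteKernel η] [IsSFiniteKernel η']
    (hκ : κ =ᵐ[π.map Prod.fst] κ') (hη : η =ᵐ[π.map Prod.snd] η') :
    (κ ∥ₖ η) ∘ₘ π = (κ' ∥ₖ η') ∘ₘ π := by
  refine Measure.comp_congr ?_
  filter_upwards [ae_of_ae_map measurable_fst.aemeasurable hκ,
    ae_of_ae_map measurable_snd.aemeasurable hη] with p hκp hηp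
  rw [parallelComp_apply, parallelComp_apply, hκp, hηp]

end ProbabilityTheory.Kernel

section condDistrib

variable {Ω Ω' : Type*} [MeasurableSpace Ω] [StandardBorelSpace Ω] [Nonempty Ω]
  [MeasurableSpace Ω'] (μ : Measure Ω) [IsFiniteMeasure μ] {f : Ω → Ω'}

lemma condDistrib_id_comp_map (hf : Measurable f) : condDistrib id f μ ∘ₘ μ.map f = μ := by
  rw [condDistrib_comp_map hf.aemeasurable aemeasurable_id, Measure.map_id]

lemma map_condDistrib_id_ae_eq_id [StandardBorelSpace Ω'] [Nonempty Ω'] (hf : Measurable f) :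
    (condDistrib id f μ).map f =ᵐ[μ.map f] Kernel.id :=
  (condDistrib_comp f aemeasurable_id hf).symm.trans (condDistrib_self f)

end condDistrib

/-- Couplings of pushforward measures are exactly pushforwards of couplings. -/
theorem couplings_of_pushforwards {X Y X' Y' : Type*}
    [MeasurableSpace X] [TopologicalSpace X] [PolishSpace X] [BorelSpace X]
    [MeasurableSpace Y] [TopologicalSpace Y] [PolishSpace Y] [BorelSpace Y]
    [MeasurableSpace X'] [TopologicalSpace X'] [PolishSpace X'] [BorelSpace X']
    [MeasurableSpace Y'] [TopologicalSpace Y'] [PolishSpace Y'] [BorelSpace Y']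
    (μX : Measure X) (μY : Measure Y) [IsProbabilityMeasure μX] [IsProbabilityMeasure μY]
    (f : X → X') (g : Y → Y') (hf : Measurable f) (hg : Measurable g) :
    {π' : Measure (X' × Y') | π'.map Prod.fst = μX.map f ∧ π'.map Prod.snd = μY.map g}
      = (fun π : Measure (X × Y) => π.map (Prod.map f g)) ''
        {π : Measure (X × Y) | π.map Prod.fst = μX ∧ π.map Prod.snd = μY} := by
  have : Nonempty X := μX.nonempty_of_neZero
  have : Nonempty Y := μY.nonempty_of_neZero
  have : Nonempty X' := ⟨f (Classical.arbitrary X)⟩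
  have : Nonempty Y' := ⟨g (Classical.arbitrary Y)⟩
  ext π'
  constructor
  · rintro ⟨h1, h2⟩
    refine ⟨(condDistrib id f μX ∥ₖ condDistrib id g μY) ∘ₘ π', ⟨?_, ?_⟩, ?_⟩
    · rw [Kernel.map_fst_parallelComp_comp, h1, condDistrib_id_comp_map μX hf]
    · rw [Kernel.map_snd_parallelComp_comp, h2, condDistrib_id_comp_map μY hg]
    · have hfX := map_condDistrib_id_ae_eq_id μX hf
      have hgY := map_condDistrib_id_ae_eq_id μY hg
      rw [← h1] at hfX
      rw [← h2] at hgY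
      beta_reduce
      rw [Measure.map_comp _ _ (hf.prodMap hg), Kernel.map_prodMap_parallelComp _ _ hf hg,
        Kernel.parallelComp_comp_congr π' hfX hgY, Kernel.id_parallelComp_id, Measure.id_comp]
  · rintro ⟨π, ⟨rfl, rfl⟩, rfl⟩
    constructor
    · rw [Measure.map_map measurable_fst (hf.prodMap hg), Measure.map_map hf measurable_fst]
      rfl
    · rw [Measure.map_map measurable_snd (hf.prodMap hg), Measure.map_map hg measurable_snd]
      rfl
end

section
/- Let (X,μ_X), (Y,μ_Y), (Z,μ_Z) be Polish probability spaces with bounded measurable kernels f_X:X×X→ℝ, f_Y:Y×Y→ℝ, f_Z:Z×Z→ℝ. For couplings π_{XY} of (μ_X,μ_Y) and π_{YZ} of (μ_Y,μ_Z), let π_{XY}•π_{YZ} denote the glued coupling of (μ_X,μ_Z). Then for any p∈[1,∞), the p-distortion satisfies the triangle inequality dis_p(π_{XY}•π_{YZ}, f_X, f_Z) ≤ dis_p(π_{XY}, f_X, f_Y) + dis_p(π_{YZ}, f_Y, f_Z). -/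
open MeasureTheory ENNReal

/-- The `p`-distortion of a coupling `π` with respect to kernels `f` and `g`. -/
noncomputable def disP {X Y : Type*} [MeasurableSpace X] [MeasurableSpace Y]
    (p : ℝ) (π : Measure (X × Y)) (f : X → X → ℝ) (g : Y → Y → ℝ) : ℝ≥0∞ :=
  (∫⁻ w, (‖f w.1.1 w.2.1 - g w.1.2 w.2.2‖₊ : ℝ≥0∞) ^ p ∂(π.prod π)) ^ (1 / p)

/-!
`disP p π f g` is the `Lᵖ(π ⊗ π)` seminorm of the distortion function
`((x, y), (x', y')) ↦ f x x' - g y y'`. For a measure `ρ` on `X × Y × Z` the distortion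
function of `fX, fZ` pulled back to `ρ ⊗ ρ` is the sum of those of `fX, fY` and `fY, fZ`,
so the triangle inequality is Minkowski's inequality in `Lᵖ(ρ ⊗ ρ)`.
-/

section Distortion

variable {W X Y Z : Type*}

def distortion (f : X → X → ℝ) (g : Y → Y → ℝ) (w : (X × Y) × (X × Y)) : ℝ :=
  f w.1.1 w.2.1 - g w.1.2 w.2.2

lemma distortion_comp_add (fX : X → X → ℝ) (fY : Y → Y → ℝ) (fZ : Z → Z → ℝ) :
    distortion fX fZ ∘ Prod.map (fun w : X × Y × Z => (w.1, w.2.2)) (fun w => (w.1, w.2.2))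
      = distortion fX fY ∘ Prod.map (fun w : X × Y × Z => (w.1, w.2.1))
          (fun w : X × Y × Z => (w.1, w.2.1))
        + distortion fY fZ ∘ Prod.map (fun w : X × Y × Z => w.2) (fun w : X × Y × Z => w.2) := by
  funext w
  simp only [distortion, Function.comp_apply, Prod.map_fst, Prod.map_snd, Pi.add_apply,
    sub_add_sub_cancel]

variable [MeasurableSpace W] [MeasurableSpace X] [MeasurableSpace Y] [MeasurableSpace Z]

lemma measurable_distortion {f : X → X → ℝ} {g : Y → Y → ℝ}
    (hf : Measurable (Function.uncurry f)) (hg : Measurable (Function.uncurry g)) :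
    Measurable (distortion f g) :=
  (hf.comp (measurable_fst.fst.prodMk measurable_snd.fst)).sub
    (hg.comp (measurable_fst.snd.prodMk measurable_snd.snd))

lemma disP_eq_eLpNorm {p : ℝ} (hp : 0 < p) (π : Measure (X × Y)) (f : X → X → ℝ)
    (g : Y → Y → ℝ) :
    disP p π f g = eLpNorm (distortion f g) (.ofReal p) (π.prod π) := by
  rw [eLpNorm_eq_eLpNorm' (by simpa using hp) ofReal_ne_top, toReal_ofReal hp.le]
  rfl

lemma disP_map_eq_eLpNorm {p : ℝ} (hp : 0 < p) (ρ : Measure W) [SFinite ρ] {φ : W → X × Y}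
    (hφ : Measurable φ) {f : X → X → ℝ} {g : Y → Y → ℝ}
    (hf : Measurable (Function.uncurry f)) (hg : Measurable (Function.uncurry g)) :
    disP p (ρ.map φ) f g
      = eLpNorm (distortion f g ∘ Prod.map φ φ) (.ofReal p) (ρ.prod ρ) := by
  rw [disP_eq_eLpNorm hp, Measure.map_prod_map ρ ρ hφ hφ,
    eLpNorm_map_measure (measurable_distortion hf hg).aestronglyMeasurable
      (hφ.prodMap hφ).aemeasurable]

theorem disP_map_le_add {p : ℝ} (hp : 1 ≤ p) (ρ : Measure (X × Y × Z)) [SFinite ρ]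
    {fX : X → X → ℝ} {fY : Y → Y → ℝ} {fZ : Z → Z → ℝ}
    (hfX : Measurable (Function.uncurry fX)) (hfY : Measurable (Function.uncurry fY))
    (hfZ : Measurable (Function.uncurry fZ)) :
    disP p (ρ.map fun w => (w.1, w.2.2)) fX fZ
      ≤ disP p (ρ.map fun w => (w.1, w.2.1)) fX fY + disP p (ρ.map fun w => w.2) fY fZ := by
  have hp0 : 0 < p := zero_lt_one.trans_le hp
  rw [disP_map_eq_eLpNorm hp0 ρ (by fun_prop) hfX hfZ,
    disP_map_eq_eLpNorm hp0 ρ (by fun_prop) hfX hfY,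
    disP_map_eq_eLpNorm hp0 ρ (by fun_prop) hfY hfZ, distortion_comp_add]
  exact eLpNorm_add_le
    ((measurable_distortion hfX hfY).comp (by fun_prop)).aestronglyMeasurable
    ((measurable_distortion hfY hfZ).comp (by fun_prop)).aestronglyMeasurable
    (by simpa using hp)

end Distortion

theorem disP_triangle_gluing_general {X Y Z : Type*}
    [MeasurableSpace X] [MeasurableSpace Y] [MeasurableSpace Z]
    (μX : Measure X) [IsProbabilityMeasure μX]
    (fX : X → X → ℝ) (fY : Y → Y → ℝ) (fZ : Z → Z → ℝ)
    (hfX : Measurable (Function.uncurry fX)) (hfY : Measurable (Function.uncurry fY))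
    (hfZ : Measurable (Function.uncurry fZ))
    (p : ℝ) (hp : 1 ≤ p)
    (πXY : Measure (X × Y)) (πYZ : Measure (Y × Z))
    (hXY1 : πXY.map Prod.fst = μX)
    (πt : Measure (X × Y × Z))
    (h1 : πt.map (fun w => (w.1, w.2.1)) = πXY)
    (h2 : πt.map (fun w => w.2) = πYZ) :
    disP p (πt.map (fun w => (w.1, w.2.2))) fX fZ
      ≤ disP p πXY fX fY + disP p πYZ fY fZ := by
  have : IsFiniteMeasure (πXY.map Prod.fst) := hXY1 ▸ inferInstance
  have : IsFiniteMeasure πXY := Measure.isFiniteMeasure_of_map measurable_fst.aemeasurable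
  have : IsFiniteMeasure (πt.map fun w => (w.1, w.2.1)) := h1 ▸ inferInstance
  have : IsFiniteMeasure πt :=
    Measure.isFiniteMeasure_of_map (f := fun w : X × Y × Z => (w.1, w.2.1)) (by fun_prop)
  rw [← h1, ← h2]
  exact disP_map_le_add hp πt hfX hfY hfZ

/-- Triangle inequality for the `p`-distortion along glued couplings: if `π̃` glues the
couplings `πXY` and `πYZ`, then the distortion of its `(X,Z)`-marginal is at most the sum
of the distortions of `πXY` and `πYZ`. -/
theorem disP_triangle_gluing {X Y Z : Type*}
    [MeasurableSpace X] [TopologicalSpace X] [PolishSpace X] [BorelSpace X]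
    [MeasurableSpace Y] [TopologicalSpace Y] [PolishSpace Y] [BorelSpace Y]
    [MeasurableSpace Z] [TopologicalSpace Z] [PolishSpace Z] [BorelSpace Z]
    (μX : Measure X) (μY : Measure Y) (μZ : Measure Z)
    [IsProbabilityMeasure μX] [IsProbabilityMeasure μY] [IsProbabilityMeasure μZ]
    (fX : X → X → ℝ) (fY : Y → Y → ℝ) (fZ : Z → Z → ℝ)
    (hfX : Measurable (Function.uncurry fX)) (hfY : Measurable (Function.uncurry fY))
    (hfZ : Measurable (Function.uncurry fZ))
    (CX CY CZ : ℝ)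
    (hbX : ∀ x x', |fX x x'| ≤ CX) (hbY : ∀ y y', |fY y y'| ≤ CY)
    (hbZ : ∀ z z', |fZ z z'| ≤ CZ)
    (p : ℝ) (hp : 1 ≤ p)
    (πXY : Measure (X × Y)) (πYZ : Measure (Y × Z))
    (hXY1 : πXY.map Prod.fst = μX) (hXY2 : πXY.map Prod.snd = μY)
    (hYZ1 : πYZ.map Prod.fst = μY) (hYZ2 : πYZ.map Prod.snd = μZ)
    (πt : Measure (X × Y × Z))
    (h1 : πt.map (fun w => (w.1, w.2.1)) = πXY)
    (h2 : πt.map (fun w => w.2) = πYZ) :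
    disP p (πt.map (fun w => (w.1, w.2.2))) fX fZ
      ≤ disP p πXY fX fY + disP p πYZ fY fZ :=
  disP_triangle_gluing_general μX fX fY fZ hfX hfY hfZ p hp πXY πYZ hXY1 πt h1 h2
end

section
/- Fix a class 𝔑 of parameterized measure networks with a cost structure C that is symmetric, respects identities, and respects gluing (a symmetric lax homomorphism). Then GW_C(X,Y) := inf over couplings π of (μ_X,μ_Y) of C_{X,Y}(π) defines a pseudometric on 𝔑: it is nonnegative, symmetric, satisfies GW_C(X,X)=0, and satisfies the triangle inequality. -/
/-!
The optimal cost `GW_C(X, Y)` is an infimum of `C_{X,Y}` over couplings, so each metric axiom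
reduces to a statement about couplings. Swapping the factors is a bijection between couplings of
`(μ_X, μ_Y)` and of `(μ_Y, μ_X)`, which gives symmetry; the diagonal coupling has cost zero; and
for the triangle inequality two couplings `π_{XY}`, `π_{YZ}` are glued along their common marginal
`μ_Y` (by disintegrating `π_{YZ}` over `Y`, which needs the spaces to be standard Borel) into a
measure on `X × Y × Z` whose `(X, Z)`-marginal is a coupling of cost at most
`C_{X,Y}(π_{XY}) + C_{Y,Z}(π_{YZ})`.
-/

open MeasureTheory ProbabilityTheory
open scoped Pointwise

namespace MeasureTheory.Measure

variable {α β γ : Type*} [MeasurableSpace α] [MeasurableSpace β] [MeasurableSpace γ]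

def IsCoupling (μ : Measure α) (ν : Measure β) (π : Measure (α × β)) : Prop :=
  π.fst = μ ∧ π.snd = ν

section Coupling

variable {μ : Measure α} {ν : Measure β} {ρ : Measure γ}

lemma IsCoupling.map_swap {π : Measure (α × β)} (h : IsCoupling μ ν π) :
    IsCoupling ν μ (π.map Prod.swap) :=
  ⟨by rw [fst_map_swap, h.2], by rw [snd_map_swap, h.1]⟩

lemma isCoupling_map_diag (μ : Measure α) : IsCoupling μ μ (μ.map fun x => (x, x)) :=
  ⟨(fst_map_prodMk measurable_id).trans map_id, (snd_map_prodMk measurable_id).trans map_id⟩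

lemma isCoupling_prod (μ : Measure α) (ν : Measure β) [IsProbabilityMeasure μ]
    [IsProbabilityMeasure ν] : IsCoupling μ ν (μ.prod ν) :=
  ⟨fst_prod, snd_prod⟩

lemma IsCoupling.isProbabilityMeasure [IsProbabilityMeasure μ] {π : Measure (α × β)}
    (h : IsCoupling μ ν π) : IsProbabilityMeasure π := by
  have : IsProbabilityMeasure π.fst := h.1 ▸ ‹IsProbabilityMeasure μ›
  exact @isProbabilityMeasure_of_map _ _ _ _ π Prod.fst this

lemma isCoupling_map_fst_snd_snd {π : Measure (α × β × γ)}
    (h₁ : (π.map fun w => (w.1, w.2.1)).fst = μ) (h₂ : (π.map fun w => w.2).snd = ρ) :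
    IsCoupling μ ρ (π.map fun w => (w.1, w.2.2)) := by
  rw [fst_map_prodMk (by fun_prop)] at h₁
  refine ⟨by rwa [fst_map_prodMk (by fun_prop)], ?_⟩
  rw [snd_map_prodMk (by fun_prop), ← h₂, Measure.snd, map_map measurable_snd (by fun_prop)]
  rfl

end Coupling

lemma map_compProd_prodMkLeft (π : Measure (α × β)) [SFinite π] (κ : Kernel β γ)
    [IsSFiniteKernel κ] :
    (π ⊗ₘ κ.prodMkLeft α).map (fun p => (p.1.2, p.2)) = π.snd ⊗ₘ κ := by
  ext s hs
  rw [Measure.map_apply (by fun_prop) hs, Measure.compProd_apply (hs.preimage (by fun_prop)),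
    Measure.compProd_apply hs, Measure.snd,
    lintegral_map (Kernel.measurable_kernel_prodMk_left hs) measurable_snd]
  rfl

theorem exists_map_eq_of_snd_eq_fst [StandardBorelSpace γ] [Nonempty γ]
    (π₁ : Measure (α × β)) (π₂ : Measure (β × γ)) [SFinite π₁] [IsFiniteMeasure π₂]
    (h : π₁.snd = π₂.fst) :
    ∃ π : Measure (α × β × γ),
      π.map (fun w => (w.1, w.2.1)) = π₁ ∧ π.map (fun w => w.2) = π₂ := by
  refine ⟨(π₁ ⊗ₘ π₂.condKernel.prodMkLeft α).map MeasurableEquiv.prodAssoc, ?_, ?_⟩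
  · rw [Measure.map_map (by fun_prop) (by fun_prop)]
    exact fst_compProd _ _
  · rw [Measure.map_map (by fun_prop) (by fun_prop)]
    exact (map_compProd_prodMkLeft _ _).trans (h ▸ π₂.disintegrate π₂.condKernel)

lemma IsCoupling.exists_glue [StandardBorelSpace γ] {μ : Measure α} {ν : Measure β}
    {ρ : Measure γ} [IsProbabilityMeasure μ] [IsProbabilityMeasure ν]
    {π₁ : Measure (α × β)} {π₂ : Measure (β × γ)} (h₁ : IsCoupling μ ν π₁)
    (h₂ : IsCoupling ν ρ π₂) :
    ∃ π : Measure (α × β × γ),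
      π.map (fun w => (w.1, w.2.1)) = π₁ ∧ π.map (fun w => w.2) = π₂ := by
  have := h₁.isProbabilityMeasure
  have := h₂.isProbabilityMeasure
  have : Nonempty γ := (nonempty_of_isProbabilityMeasure π₂).map Prod.snd
  exact exists_map_eq_of_snd_eq_fst π₁ π₂ (h₁.2.trans h₂.1.symm)

noncomputable def optimalCost (c : Measure (α × β) → ℝ) (μ : Measure α) (ν : Measure β) : ℝ :=
  sInf (c '' {π | IsCoupling μ ν π})

section OptimalCost

variable {μ : Measure α} {ν : Measure β} {ρ : Measure γ}

lemma optimalCost_nonneg {c : Measure (α × β) → ℝ} (hc : ∀ π, 0 ≤ c π) :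
    0 ≤ optimalCost c μ ν :=
  Real.sInf_nonneg (by rintro _ ⟨π, -, rfl⟩; exact hc π)

lemma bddBelow_image_of_nonneg {c : Measure (α × β) → ℝ} (hc : ∀ π, 0 ≤ c π)
    (s : Set (Measure (α × β))) : BddBelow (c '' s) :=
  ⟨0, by rintro _ ⟨π, -, rfl⟩; exact hc π⟩

lemma optimalCost_le {c : Measure (α × β) → ℝ} (hc : ∀ π, 0 ≤ c π) {π : Measure (α × β)}
    (hπ : IsCoupling μ ν π) : optimalCost c μ ν ≤ c π :=
  csInf_le (bddBelow_image_of_nonneg hc _) ⟨π, hπ, rfl⟩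

lemma optimalCost_swap {c : Measure (α × β) → ℝ} {c' : Measure (β × α) → ℝ}
    (h : ∀ π, c π = c' (π.map Prod.swap)) : optimalCost c μ ν = optimalCost c' ν μ := by
  unfold optimalCost
  congr 1
  ext r
  constructor
  · rintro ⟨π, hπ, rfl⟩
    exact ⟨π.map Prod.swap, hπ.map_swap, (h π).symm⟩
  · rintro ⟨π, hπ, rfl⟩
    refine ⟨π.map Prod.swap, hπ.map_swap, ?_⟩
    rw [h, Measure.map_map measurable_swap measurable_swap, Prod.swap_swap_eq, Measure.map_id]

lemma optimalCost_le_add [IsProbabilityMeasure μ] [IsProbabilityMeasure ν]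
    [IsProbabilityMeasure ρ] {c₁ : Measure (α × β) → ℝ} {c₂ : Measure (β × γ) → ℝ}
    {c₃ : Measure (α × γ) → ℝ} (hc₁ : ∀ π, 0 ≤ c₁ π) (hc₂ : ∀ π, 0 ≤ c₂ π)
    (hc₃ : ∀ π, 0 ≤ c₃ π)
    (hglue : ∀ π₁ π₂, IsCoupling μ ν π₁ → IsCoupling ν ρ π₂ →
      ∃ π₃, IsCoupling μ ρ π₃ ∧ c₃ π₃ ≤ c₁ π₁ + c₂ π₂) :
    optimalCost c₃ μ ρ ≤ optimalCost c₁ μ ν + optimalCost c₂ ν ρ := by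
  have hne₁ : (c₁ '' {π | IsCoupling μ ν π}).Nonempty := ⟨_, _, isCoupling_prod μ ν, rfl⟩
  have hne₂ : (c₂ '' {π | IsCoupling ν ρ π}).Nonempty := ⟨_, _, isCoupling_prod ν ρ, rfl⟩
  calc optimalCost c₃ μ ρ
      ≤ sInf (c₁ '' {π | IsCoupling μ ν π} + c₂ '' {π | IsCoupling ν ρ π}) := by
        refine le_csInf (hne₁.add hne₂) ?_
        rintro _ ⟨_, ⟨π₁, h₁, rfl⟩, _, ⟨π₂, h₂, rfl⟩, rfl⟩
        obtain ⟨π₃, h₃, hle⟩ := hglue π₁ π₂ h₁ h₂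
        exact (optimalCost_le hc₃ h₃).trans hle
    _ = optimalCost c₁ μ ν + optimalCost c₂ ν ρ :=
        csInf_add hne₁ (bddBelow_image_of_nonneg hc₁ _) hne₂ (bddBelow_image_of_nonneg hc₂ _)

end OptimalCost

end MeasureTheory.Measure

/-- If a cost structure `C` on a class of parameterized measure networks is nonnegative,
symmetric, respects identities, and respects gluing (i.e. it is a symmetric lax
homomorphism), then the induced parameterized Gromov–Wasserstein distance
`GW i j = inf over couplings π of C i j π` is a pseudometric. -/
theorem parameterizedGW_pseudometric {ι : Type*} (S : ι → Type*)
    [∀ i, MeasurableSpace (S i)] [∀ i, TopologicalSpace (S i)]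
    [∀ i, PolishSpace (S i)] [∀ i, BorelSpace (S i)]
    (μ : ∀ i, Measure (S i)) [∀ i, IsProbabilityMeasure (μ i)]
    (C : ∀ i j, Measure (S i × S j) → ℝ)
    (hnonneg : ∀ i j π, 0 ≤ C i j π)
    (hsymm : ∀ i j (π : Measure (S i × S j)), C i j π = C j i (π.map Prod.swap))
    (hid : ∀ i, C i i ((μ i).map (fun x => (x, x))) = 0)
    (hglue : ∀ i j k (πij : Measure (S i × S j)) (πjk : Measure (S j × S k))
      (πt : Measure (S i × S j × S k)),
      πij.map Prod.fst = μ i → πij.map Prod.snd = μ j →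
      πjk.map Prod.fst = μ j → πjk.map Prod.snd = μ k →
      πt.map (fun w => (w.1, w.2.1)) = πij → πt.map (fun w => w.2) = πjk →
      C i k (πt.map (fun w => (w.1, w.2.2))) ≤ C i j πij + C j k πjk) :
    let GW : ι → ι → ℝ := fun i j => sInf {r : ℝ | ∃ π : Measure (S i × S j),
      π.map Prod.fst = μ i ∧ π.map Prod.snd = μ j ∧ r = C i j π}
    (∀ i j, 0 ≤ GW i j) ∧ (∀ i j, GW i j = GW j i) ∧ (∀ i, GW i i = 0) ∧
      (∀ i j k, GW i k ≤ GW i j + GW j k) := by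
  intro GW
  have hGW : ∀ i j, GW i j = Measure.optimalCost (C i j) (μ i) (μ j) := fun i j => by
    refine congrArg sInf (Set.ext fun r => ⟨?_, ?_⟩)
    · rintro ⟨π, h₁, h₂, rfl⟩
      exact ⟨π, ⟨h₁, h₂⟩, rfl⟩
    · rintro ⟨π, ⟨h₁, h₂⟩, rfl⟩
      exact ⟨π, h₁, h₂, rfl⟩
  simp only [hGW]
  refine ⟨fun i j => Measure.optimalCost_nonneg (hnonneg i j),
    fun i j => Measure.optimalCost_swap (hsymm i j), fun i => ?_, fun i j k => ?_⟩
  · refine le_antisymm ?_ (Measure.optimalCost_nonneg (hnonneg i i))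
    exact (Measure.optimalCost_le (hnonneg i i) (Measure.isCoupling_map_diag (μ i))).trans_eq
      (hid i)
  · refine Measure.optimalCost_le_add (hnonneg i j) (hnonneg j k) (hnonneg i k)
      fun π₁ π₂ h₁ h₂ => ?_
    obtain ⟨π, hπ₁, hπ₂⟩ := h₁.exists_glue h₂
    exact ⟨_, Measure.isCoupling_map_fst_snd_snd (hπ₁ ▸ h₁.1) (hπ₂ ▸ h₂.2),
      hglue i j k π₁ π₂ π h₁.1 h₁.2 h₂.1 h₂.2 hπ₁ hπ₂⟩
end

section
/- Let X, Y be finite sets with probability measures, Ω a finite parameter space with probability measure ν, and parameterized kernels ω_X^t, ω_Y^t for t∈Ω. For p,q∈[1,∞) with p ≤ q, the parameterized GW cost satisfies inf_π ‖dis_p(π,ω_X,ω_Y)‖_{L^q(Ω;ν)} ≤ inf_π ‖ ‖ω_X(x,x')−ω_Y(y,y')‖_{L^q(Ω;ν)} ‖_{L^p((X×Y)²;π⊗π)}, i.e., the parameterized GW distance is bounded above by the Z-Gromov-Wasserstein distance with Z = L^q(Ω;ν); for p ≥ q the reverse inequality holds, and for p=q they are equal. -/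
/-!
For a fixed coupling `π`, both costs are mixed norms of `c(z, t) = |ωX t x x' - ωY t y y'|` over
`((X × Y)², π ⊗ π) × (Ω, ν)`, taken in the two possible orders. Minkowski's integral inequality,
the triangle inequality in `L^{q/p}(ν)` applied to the sum over `z` of `t ↦ c(z, t)^p (π ⊗ π)(z)`,
shows that the order with the `L^q`-norm outside is the smaller one when `p ≤ q`. The comparison,
made coupling by coupling, passes to the infima.
-/

open Finset

def IsCoupling {X Y : Type*} [Fintype X] [Fintype Y]
    (μX : X → ℝ) (μY : Y → ℝ) (π : X → Y → ℝ) : Prop :=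
  (∀ x y, 0 ≤ π x y) ∧ (∀ x, ∑ y, π x y = μX x) ∧ (∀ y, ∑ x, π x y = μY y)

section Minkowski

variable {ι κ : Type*} [Fintype ι] [Fintype κ]

theorem Lp_sum_le_sum_Lp_of_nonneg (g : ι → κ → ℝ) (hg : ∀ i t, 0 ≤ g i t)
    {r : ℝ} (hr : 1 ≤ r) :
    (∑ t, (∑ i, g i t) ^ r) ^ (1 / r) ≤ ∑ i, (∑ t, g i t ^ r) ^ (1 / r) := by
  have : Fact (1 ≤ ENNReal.ofReal r) := ⟨by simpa using ENNReal.ofReal_le_ofReal hr⟩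
  have hr' : (ENNReal.ofReal r).toReal = r := ENNReal.toReal_ofReal (by linarith)
  have hnorm : ∀ f : κ → ℝ, (∀ t, 0 ≤ f t) →
      ‖WithLp.toLp (ENNReal.ofReal r) f‖ = (∑ t, f t ^ r) ^ (1 / r) := fun f hf => by
    rw [PiLp.norm_eq_sum (by rw [hr']; linarith), hr']
    simp only [Real.norm_of_nonneg (hf _)]
  have htri := norm_sum_le univ fun i => WithLp.toLp (ENNReal.ofReal r) (g i)
  have hsum : ∑ i, g i = fun t => ∑ i, g i t := by ext; simp only [Finset.sum_apply]
  rwa [← WithLp.toLp_sum, hsum, hnorm _ fun t => sum_nonneg fun i _ => hg i t,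
    sum_congr rfl fun i _ => hnorm _ (hg i)] at htri

theorem weighted_Lp_sum_le_sum_weighted_Lp_of_nonneg (f : ι → κ → ℝ) (hf : ∀ i t, 0 ≤ f i t)
    (ν : κ → ℝ) (hν : ∀ t, 0 ≤ ν t) {r : ℝ} (hr : 1 ≤ r) :
    (∑ t, (∑ i, f i t) ^ r * ν t) ^ (1 / r) ≤ ∑ i, (∑ t, f i t ^ r * ν t) ^ (1 / r) := by
  have hr0 : r ≠ 0 := by positivity
  have hscale : ∀ a t, 0 ≤ a → (a * ν t ^ (1 / r)) ^ r = a ^ r * ν t := fun a t ha => by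
    rw [Real.mul_rpow ha (Real.rpow_nonneg (hν t) _), ← Real.rpow_mul (hν t),
      one_div_mul_cancel hr0, Real.rpow_one]
  have h := Lp_sum_le_sum_Lp_of_nonneg (fun i t => f i t * ν t ^ (1 / r))
    (fun i t => mul_nonneg (hf i t) (Real.rpow_nonneg (hν t) _)) hr
  simpa only [← sum_mul, hscale _ _ (sum_nonneg fun i _ => hf i _), hscale _ _ (hf _ _)] using h

end Minkowski

section MixedNorm

variable {ι κ : Type*} [Fintype ι] [Fintype κ]

/-- `mixedLpNorm p q w ν c = ‖t ↦ ‖c(·, t)‖_{L^p(w)}‖_{L^q(ν)}`. -/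
noncomputable def mixedLpNorm (p q : ℝ) (w : ι → ℝ) (ν : κ → ℝ) (c : ι → κ → ℝ) : ℝ :=
  (∑ t, (∑ i, c i t ^ p * w i) ^ (q / p) * ν t) ^ (1 / q)

variable {w : ι → ℝ} {ν : κ → ℝ} {c : ι → κ → ℝ}

theorem mixedLpNorm_nonneg (p q : ℝ) (hc : ∀ i t, 0 ≤ c i t) (hw : ∀ i, 0 ≤ w i)
    (hν : ∀ t, 0 ≤ ν t) : 0 ≤ mixedLpNorm p q w ν c :=
  Real.rpow_nonneg (sum_nonneg fun t _ => mul_nonneg (Real.rpow_nonneg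
    (sum_nonneg fun i _ => mul_nonneg (Real.rpow_nonneg (hc i t) _) (hw i)) _) (hν t)) _

theorem mixedLpNorm_le_swap {p q : ℝ} (hp : 0 < p) (hpq : p ≤ q) (hc : ∀ i t, 0 ≤ c i t)
    (hw : ∀ i, 0 ≤ w i) (hν : ∀ t, 0 ≤ ν t) :
    mixedLpNorm p q w ν c ≤ mixedLpNorm q p ν w (Function.swap c) := by
  have hq : 0 < q := hp.trans_le hpq
  have hr : 1 ≤ q / p := (one_le_div hp).2 hpq
  have hinner : ∀ i, (∑ t, (c i t ^ p * w i) ^ (q / p) * ν t) ^ (1 / (q / p))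
      = (∑ t, c i t ^ q * ν t) ^ (p / q) * w i := fun i => by
    have hterm : ∀ t, (c i t ^ p * w i) ^ (q / p) * ν t = c i t ^ q * ν t * w i ^ (q / p) :=
      fun t => by
        rw [Real.mul_rpow (Real.rpow_nonneg (hc i t) _) (hw i), ← Real.rpow_mul (hc i t),
          mul_div_cancel₀ q hp.ne']
        ring
    rw [sum_congr rfl fun t _ => hterm t, ← sum_mul, one_div_div,
      Real.mul_rpow (sum_nonneg fun t _ => mul_nonneg (Real.rpow_nonneg (hc i t) _) (hν t))
        (Real.rpow_nonneg (hw i) _), ← Real.rpow_mul (hw i),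
      div_mul_div_cancel₀ hp.ne', div_self hq.ne', Real.rpow_one]
  have hmink := weighted_Lp_sum_le_sum_weighted_Lp_of_nonneg (fun i t => c i t ^ p * w i)
    (fun i t => mul_nonneg (Real.rpow_nonneg (hc i t) _) (hw i)) ν hν hr
  simp only [hinner] at hmink
  have hS : 0 ≤ ∑ t, (∑ i, c i t ^ p * w i) ^ (q / p) * ν t :=
    sum_nonneg fun t _ => mul_nonneg (Real.rpow_nonneg
      (sum_nonneg fun i _ => mul_nonneg (Real.rpow_nonneg (hc i t) _) (hw i)) _) (hν t)
  calc mixedLpNorm p q w ν c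
      = ((∑ t, (∑ i, c i t ^ p * w i) ^ (q / p) * ν t) ^ (1 / (q / p))) ^ (1 / p) := by
        rw [mixedLpNorm, ← Real.rpow_mul hS]
        congr 1
        field_simp
    _ ≤ mixedLpNorm q p ν w (Function.swap c) :=
        Real.rpow_le_rpow (Real.rpow_nonneg hS _) hmink (by positivity)

end MixedNorm

theorem sInf_setOf_exists_le_of_le {α : Type*} {P : α → Prop} {f g : α → ℝ}
    (hf : ∀ a, P a → 0 ≤ f a) (hfg : ∀ a, P a → f a ≤ g a) :
    sInf {r : ℝ | ∃ a, P a ∧ r = f a} ≤ sInf {r : ℝ | ∃ a, P a ∧ r = g a} := by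
  have hrange : ∀ h : α → ℝ, {r : ℝ | ∃ a, P a ∧ r = h a} = Set.range fun a : Subtype P => h a :=
    fun h => by ext r; simp [eq_comm]
  rw [hrange f, hrange g]
  exact ciInf_mono ⟨0, by rintro _ ⟨a, rfl⟩; exact hf a a.2⟩ fun a => hfg a a.2

theorem parameterizedGW_vs_ZGW_general {X Y Ω : Type*} [Fintype X] [Fintype Y] [Fintype Ω]
    (μX : X → ℝ) (μY : Y → ℝ) (ν : Ω → ℝ)
    (hν0 : ∀ t, 0 ≤ ν t)
    (ωX : Ω → X → X → ℝ) (ωY : Ω → Y → Y → ℝ)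
    (p q : ℝ) (hp : 1 ≤ p) (hq : 1 ≤ q) :
    let A : (X → Y → ℝ) → ℝ := fun π =>
      (∑ t, (∑ x, ∑ y, ∑ x', ∑ y',
        |ωX t x x' - ωY t y y'| ^ p * (π x y * π x' y')) ^ (q / p) * ν t) ^ (1 / q)
    let B : (X → Y → ℝ) → ℝ := fun π =>
      (∑ x, ∑ y, ∑ x', ∑ y',
        (∑ t, |ωX t x x' - ωY t y y'| ^ q * ν t) ^ (p / q) * (π x y * π x' y')) ^ (1 / p)
    (p ≤ q → sInf {r : ℝ | ∃ π, IsCoupling μX μY π ∧ r = A π}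
        ≤ sInf {r : ℝ | ∃ π, IsCoupling μX μY π ∧ r = B π}) ∧
    (q ≤ p → sInf {r : ℝ | ∃ π, IsCoupling μX μY π ∧ r = B π}
        ≤ sInf {r : ℝ | ∃ π, IsCoupling μX μY π ∧ r = A π}) ∧
    (p = q → sInf {r : ℝ | ∃ π, IsCoupling μX μY π ∧ r = A π}
        = sInf {r : ℝ | ∃ π, IsCoupling μX μY π ∧ r = B π}) := by
  intro A B
  let c : (X × Y) × (X × Y) → Ω → ℝ := fun z t => |ωX t z.1.1 z.2.1 - ωY t z.1.2 z.2.2|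
  let W : (X → Y → ℝ) → (X × Y) × (X × Y) → ℝ := fun π z => π z.1.1 z.1.2 * π z.2.1 z.2.2
  have hc : ∀ z t, 0 ≤ c z t := fun _ _ => abs_nonneg _
  have hc' : ∀ t z, 0 ≤ Function.swap c t z := fun _ _ => abs_nonneg _
  have hW : ∀ π, IsCoupling μX μY π → ∀ z, 0 ≤ W π z := fun _ hπ _ =>
    mul_nonneg (hπ.1 _ _) (hπ.1 _ _)
  have hA : ∀ π, A π = mixedLpNorm p q (W π) ν c := fun π => by
    simp only [A, mixedLpNorm, Fintype.sum_prod_type, c, W]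
  have hB : ∀ π, B π = mixedLpNorm q p ν (W π) (Function.swap c) := fun π => by
    simp only [B, mixedLpNorm, Fintype.sum_prod_type, Function.swap, c, W]
  have hAB : p ≤ q → sInf {r : ℝ | ∃ π, IsCoupling μX μY π ∧ r = A π}
      ≤ sInf {r : ℝ | ∃ π, IsCoupling μX μY π ∧ r = B π} := fun hpq =>
    sInf_setOf_exists_le_of_le (fun π hπ => hA π ▸ mixedLpNorm_nonneg p q hc (hW π hπ) hν0)
      fun π hπ => hA π ▸ hB π ▸ mixedLpNorm_le_swap (by linarith) hpq hc (hW π hπ) hν0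
  have hBA : q ≤ p → sInf {r : ℝ | ∃ π, IsCoupling μX μY π ∧ r = B π}
      ≤ sInf {r : ℝ | ∃ π, IsCoupling μX μY π ∧ r = A π} := fun hqp =>
    sInf_setOf_exists_le_of_le
      (fun π hπ => hB π ▸ mixedLpNorm_nonneg q p hc' hν0 (hW π hπ))
      fun π hπ => hA π ▸ hB π ▸ mixedLpNorm_le_swap (by linarith) hqp hc' hν0 (hW π hπ)
  exact ⟨hAB, hBA, fun h => le_antisymm (hAB h.le) (hBA h.ge)⟩

/-- Comparison between the parameterized Gromov–Wasserstein distance over a fixed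
finite parameter space `(Ω, ν)` and the Z-Gromov–Wasserstein distance with
`Z = L^q(Ω; ν)`: for `p ≤ q` the parameterized GW cost is dominated by the Z-GW cost,
for `p ≥ q` the reverse inequality holds, and for `p = q` they agree. -/
theorem parameterizedGW_vs_ZGW {X Y Ω : Type*} [Fintype X] [Fintype Y] [Fintype Ω]
    (μX : X → ℝ) (μY : Y → ℝ) (ν : Ω → ℝ)
    (hμX0 : ∀ x, 0 ≤ μX x) (hμX1 : ∑ x, μX x = 1)
    (hμY0 : ∀ y, 0 ≤ μY y) (hμY1 : ∑ y, μY y = 1)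
    (hν0 : ∀ t, 0 ≤ ν t) (hν1 : ∑ t, ν t = 1)
    (ωX : Ω → X → X → ℝ) (ωY : Ω → Y → Y → ℝ)
    (p q : ℝ) (hp : 1 ≤ p) (hq : 1 ≤ q) :
    let A : (X → Y → ℝ) → ℝ := fun π =>
      (∑ t, (∑ x, ∑ y, ∑ x', ∑ y',
        |ωX t x x' - ωY t y y'| ^ p * (π x y * π x' y')) ^ (q / p) * ν t) ^ (1 / q)
    let B : (X → Y → ℝ) → ℝ := fun π =>
      (∑ x, ∑ y, ∑ x', ∑ y',
        (∑ t, |ωX t x x' - ωY t y y'| ^ q * ν t) ^ (p / q) * (π x y * π x' y')) ^ (1 / p)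
    (p ≤ q → sInf {r : ℝ | ∃ π, IsCoupling μX μY π ∧ r = A π}
        ≤ sInf {r : ℝ | ∃ π, IsCoupling μX μY π ∧ r = B π}) ∧
    (q ≤ p → sInf {r : ℝ | ∃ π, IsCoupling μX μY π ∧ r = B π}
        ≤ sInf {r : ℝ | ∃ π, IsCoupling μX μY π ∧ r = A π}) ∧
    (p = q → sInf {r : ℝ | ∃ π, IsCoupling μX μY π ∧ r = A π}
        = sInf {r : ℝ | ∃ π, IsCoupling μX μY π ∧ r = B π}) :=
  parameterizedGW_vs_ZGW_general μX μY ν hν0 ωX ωY p q hp hq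
end

section
/- Let X and Y be finite sets with probability measures μ_X, μ_Y, Ω_X and Ω_Y finite parameter spaces with probability measures ν_X, ν_Y, and parameterized kernels ω_X:Ω_X→(X×X→ℝ), ω_Y:Ω_Y→(Y×Y→ℝ). Define m_X(t) = (X,μ_X,ω_X^t) as a measure network, ν̄_X = (m_X)_#ν_X as a measure on the space of measure networks modulo weak isomorphism metrized by GW_p, and similarly ν̄_Y. Then for p,q∈[1,∞), W_q^{GW_p}(ν̄_X, ν̄_Y) ≤ GW_C(X,Y), where GW_C(X,Y) = (1/2) inf_{π} inf_{ξ} (∫_{Ω_X×Ω_Y} dis_p(π,ω_X^s,ω_Y^t)^q dξ(s,t))^{1/q} with π ranging over couplings of (μ_X,μ_Y) and ξ over couplings of (ν_X,ν_Y). -/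
open Finset

/-- The `p`-distortion of a coupling with respect to two kernels. -/
noncomputable def dis {X Y : Type*} [Fintype X] [Fintype Y]
    (p : ℝ) (π : X → Y → ℝ) (f : X → X → ℝ) (g : Y → Y → ℝ) : ℝ :=
  (∑ x, ∑ y, ∑ x', ∑ y', |f x x' - g y y'| ^ p * (π x y * π x' y')) ^ (1 / p)

/-! Every coupling `π` of `(μX, μY)` bounds the infimum over couplings by its own cost, so
`GW_p(X_s, Y_t) ≤ dis_p(π, ω_X^s, ω_Y^t) / 2` for all `s, t`. Taking `q`-th power means against
a coupling `ξ` of the parameter measures bounds `W_q^{GW_p}` by the cost of `(π, ξ)` in the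
definition of `GW_C`; infimizing over `(π, ξ)`, which exist since the product couplings do,
gives the claim. -/

section Coupling

variable {X Y : Type*} [Fintype X] [Fintype Y] {μX : X → ℝ} {μY : Y → ℝ}

lemma dis_nonneg (p : ℝ) {π : X → Y → ℝ} (hπ : ∀ x y, 0 ≤ π x y)
    (f : X → X → ℝ) (g : Y → Y → ℝ) : 0 ≤ dis p π f g := by
  refine Real.rpow_nonneg (sum_nonneg fun x _ => sum_nonneg fun y _ =>
    sum_nonneg fun x' _ => sum_nonneg fun y' _ => ?_) _
  have := hπ x y
  have := hπ x' y'
  positivity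

lemma isCoupling_mul (h0X : ∀ x, 0 ≤ μX x) (h1X : ∑ x, μX x = 1)
    (h0Y : ∀ y, 0 ≤ μY y) (h1Y : ∑ y, μY y = 1) :
    IsCoupling μX μY (fun x y => μX x * μY y) := by
  refine ⟨fun x y => mul_nonneg (h0X x) (h0Y y), fun x => ?_, fun y => ?_⟩
  · rw [← mul_sum, h1Y, mul_one]
  · rw [← sum_mul, h1X, one_mul]

lemma sInf_coupling_le {c : (X → Y → ℝ) → ℝ} (hc : ∀ π, IsCoupling μX μY π → 0 ≤ c π)
    {π : X → Y → ℝ} (hπ : IsCoupling μX μY π) :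
    sInf {r : ℝ | ∃ π, IsCoupling μX μY π ∧ r = c π} ≤ c π :=
  csInf_le ⟨0, by rintro _ ⟨π', hπ', rfl⟩; exact hc π' hπ'⟩ ⟨π, hπ, rfl⟩

end Coupling

lemma rpow_sum_rpow_mul_le {ι : Type*} [Fintype ι] {q a : ℝ} (hq : 0 < q) (ha : 0 ≤ a)
    {w c d : ι → ℝ} (hw : ∀ i, 0 ≤ w i) (hc : ∀ i, 0 ≤ c i) (hd : ∀ i, 0 ≤ d i)
    (hcd : ∀ i, c i ≤ a * d i) :
    (∑ i, c i ^ q * w i) ^ (1 / q) ≤ a * (∑ i, d i ^ q * w i) ^ (1 / q) := by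
  have hsum : ∑ i, c i ^ q * w i ≤ a ^ q * ∑ i, d i ^ q * w i := by
    rw [mul_sum]
    refine sum_le_sum fun i _ => ?_
    rw [← mul_assoc, ← Real.mul_rpow ha (hd i)]
    exact mul_le_mul_of_nonneg_right (Real.rpow_le_rpow (hc i) (hcd i) hq.le) (hw i)
  have hd_sum : 0 ≤ ∑ i, d i ^ q * w i :=
    sum_nonneg fun i _ => mul_nonneg (Real.rpow_nonneg (hd i) q) (hw i)
  calc (∑ i, c i ^ q * w i) ^ (1 / q)
      ≤ (a ^ q * ∑ i, d i ^ q * w i) ^ (1 / q) :=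
        Real.rpow_le_rpow
          (sum_nonneg fun i _ => mul_nonneg (Real.rpow_nonneg (hc i) q) (hw i)) hsum (by positivity)
    _ = a * (∑ i, d i ^ q * w i) ^ (1 / q) := by
        rw [Real.mul_rpow (by positivity) hd_sum, one_div, Real.rpow_rpow_inv ha hq.ne']

theorem wasserstein_le_parameterizedGW_general {X Y ΩX ΩY : Type*}
    [Fintype X] [Fintype Y] [Fintype ΩX] [Fintype ΩY]
    (μX : X → ℝ) (μY : Y → ℝ) (νX : ΩX → ℝ) (νY : ΩY → ℝ)
    (hμX0 : ∀ x, 0 ≤ μX x) (hμX1 : ∑ x, μX x = 1)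
    (hμY0 : ∀ y, 0 ≤ μY y) (hμY1 : ∑ y, μY y = 1)
    (hνX0 : ∀ s, 0 ≤ νX s) (hνX1 : ∑ s, νX s = 1)
    (hνY0 : ∀ t, 0 ≤ νY t) (hνY1 : ∑ t, νY t = 1)
    (ωX : ΩX → X → X → ℝ) (ωY : ΩY → Y → Y → ℝ)
    (p q : ℝ) (hq : 1 ≤ q) :
    let GWp : ΩX → ΩY → ℝ := fun s t =>
      (1 / 2) * sInf {r : ℝ | ∃ π, IsCoupling μX μY π ∧ r = dis p π (ωX s) (ωY t)}
    let W : ℝ := sInf {r : ℝ | ∃ ξ : ΩX → ΩY → ℝ, IsCoupling νX νY ξ ∧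
      r = (∑ s, ∑ t, GWp s t ^ q * ξ s t) ^ (1 / q)}
    let GWC : ℝ := (1 / 2) * sInf {r : ℝ | ∃ (π : X → Y → ℝ) (ξ : ΩX → ΩY → ℝ),
      IsCoupling μX μY π ∧ IsCoupling νX νY ξ ∧
      r = (∑ s, ∑ t, dis p π (ωX s) (ωY t) ^ q * ξ s t) ^ (1 / q)}
    W ≤ GWC := by
  intro GWp W GWC
  have hGWp0 : ∀ s t, 0 ≤ GWp s t := fun s t =>
    mul_nonneg (by norm_num) (Real.sInf_nonneg (by
      rintro _ ⟨π, hπ, rfl⟩; exact dis_nonneg p hπ.1 _ _))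
  have hGWp_le : ∀ π, IsCoupling μX μY π → ∀ s t, GWp s t ≤ 1 / 2 * dis p π (ωX s) (ωY t) :=
    fun π hπ s t => mul_le_mul_of_nonneg_left
      (sInf_coupling_le (fun π' hπ' => dis_nonneg p hπ'.1 _ _) hπ) (by norm_num)
  have hW_le : ∀ π ξ, IsCoupling μX μY π → IsCoupling νX νY ξ →
      2 * W ≤ (∑ s, ∑ t, dis p π (ωX s) (ωY t) ^ q * ξ s t) ^ (1 / q) := by
    intro π ξ hπ hξ
    have hW : W ≤ (∑ s, ∑ t, GWp s t ^ q * ξ s t) ^ (1 / q) :=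
      sInf_coupling_le (fun ξ' hξ' => Real.rpow_nonneg (sum_nonneg fun s _ => sum_nonneg fun t _ =>
        mul_nonneg (Real.rpow_nonneg (hGWp0 s t) q) (hξ'.1 s t)) _) hξ
    have hmean := rpow_sum_rpow_mul_le (ι := ΩX × ΩY) (by linarith : (0 : ℝ) < q)
      (by norm_num : (0 : ℝ) ≤ 1 / 2)
      (fun i => hξ.1 i.1 i.2) (fun i => hGWp0 i.1 i.2) (fun i => dis_nonneg p hπ.1 _ _)
      (fun i => hGWp_le π hπ i.1 i.2)
    rw [Fintype.sum_prod_type, Fintype.sum_prod_type] at hmean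
    linarith
  have hne : ∃ r, r ∈ {r : ℝ | ∃ (π : X → Y → ℝ) (ξ : ΩX → ΩY → ℝ),
      IsCoupling μX μY π ∧ IsCoupling νX νY ξ ∧
      r = (∑ s, ∑ t, dis p π (ωX s) (ωY t) ^ q * ξ s t) ^ (1 / q)} :=
    ⟨_, _, _, isCoupling_mul hμX0 hμX1 hμY0 hμY1, isCoupling_mul hνX0 hνX1 hνY0 hνY1, rfl⟩
  have h2W := le_csInf hne (by rintro _ ⟨π, ξ, hπ, hξ, rfl⟩; exact hW_le π ξ hπ hξ)
  show W ≤ 1 / 2 * _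
  linarith

/-- The Wasserstein distance (over the Gromov–Wasserstein space) between the pushforward
parameter measures of two pm-nets is a lower bound for the parameterized
Gromov–Wasserstein distance. Here `GWp s t` is the GW distance between the measure
networks `(X, μX, ωX s)` and `(Y, μY, ωY t)`, and the Wasserstein distance `W` is
computed with ground cost `GWp` over couplings of the parameter measures. -/
theorem wasserstein_le_parameterizedGW {X Y ΩX ΩY : Type*}
    [Fintype X] [Fintype Y] [Fintype ΩX] [Fintype ΩY]
    (μX : X → ℝ) (μY : Y → ℝ) (νX : ΩX → ℝ) (νY : ΩY → ℝ)
    (hμX0 : ∀ x, 0 ≤ μX x) (hμX1 : ∑ x, μX x = 1)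
    (hμY0 : ∀ y, 0 ≤ μY y) (hμY1 : ∑ y, μY y = 1)
    (hνX0 : ∀ s, 0 ≤ νX s) (hνX1 : ∑ s, νX s = 1)
    (hνY0 : ∀ t, 0 ≤ νY t) (hνY1 : ∑ t, νY t = 1)
    (ωX : ΩX → X → X → ℝ) (ωY : ΩY → Y → Y → ℝ)
    (p q : ℝ) (hp : 1 ≤ p) (hq : 1 ≤ q) :
    let GWp : ΩX → ΩY → ℝ := fun s t =>
      (1 / 2) * sInf {r : ℝ | ∃ π, IsCoupling μX μY π ∧ r = dis p π (ωX s) (ωY t)}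
    let W : ℝ := sInf {r : ℝ | ∃ ξ : ΩX → ΩY → ℝ, IsCoupling νX νY ξ ∧
      r = (∑ s, ∑ t, GWp s t ^ q * ξ s t) ^ (1 / q)}
    let GWC : ℝ := (1 / 2) * sInf {r : ℝ | ∃ (π : X → Y → ℝ) (ξ : ΩX → ΩY → ℝ),
      IsCoupling μX μY π ∧ IsCoupling νX νY ξ ∧
      r = (∑ s, ∑ t, dis p π (ωX s) (ωY t) ^ q * ξ s t) ^ (1 / q)}
    W ≤ GWC :=
  wasserstein_le_parameterizedGW_general μX μY νX νY hμX0 hμX1 hμY0 hμY1 hνX0 hνX1 hνY0 hνY1 ωX ωY p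
    q hq
end
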